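/- arXiv:2602.22574 — 2 statements merged into one kernel-verified Lean document; each statement's English description precedes it below -/
import Mathlib

section
/- For |q|<1 and parameters a, c, x in the region of convergence, the basic hypergeometric series satisfies the three-term recurrence ₁φ₁(aq; cq; q, x) = (c − a x) · ₁φ₁(aq; cq; q, xq) + (1 − c) · ₁φ₁(a; c; q, x). -/
open scoped BigOperators

/-- q-shifted factorial (a;q)_j -/
noncomputable def qPoch (a q : ℂ) (j : ℕ) : ℂ :=
  ∏ i ∈ Finset.range j, (1 - a * q ^ i)

/-- infinite q-shifted factorial (a;q)_∞ -/
noncomputable def qPochInf (a q : ℂ) : ℂ :=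
  ∏' j : ℕ, (1 - a * q ^ j)

/-- basic hypergeometric series ₁φ₁(a; c; q, x) -/
noncomputable def phi11 (a c q x : ℂ) : ℂ :=
  ∑' j : ℕ, qPoch a q j / (qPoch q q j * qPoch c q j) *
    (-1) ^ j * q ^ (j * (j - 1) / 2) * x ^ j

/-- basic hypergeometric series ₀φ₁(–; c; q, x) -/
noncomputable def phi01 (c q x : ℂ) : ℂ :=
  ∑' j : ℕ, q ^ (j * (j - 1)) * x ^ j / (qPoch q q j * qPoch c q j)

/-- basic hypergeometric series ₂φ₁(a, b; c; q, x) -/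
noncomputable def phi21 (a b c q x : ℂ) : ℂ :=
  ∑' j : ℕ, qPoch a q j * qPoch b q j / (qPoch q q j * qPoch c q j) * x ^ j

/-!
Compare coefficients of `x ^ (k + 1)`. Subtracting `c` times the series at `x q` multiplies the
coefficient of `₁φ₁(aq; cq; q, x)` by `1 - c q^{k+1}`, which cancels the last factor of
`(cq;q)_{k+1}`. Since `(a;q)_{k+1} = (1 - a) (aq;q)_k` and `(c;q)_{k+1} = (1 - c) (cq;q)_k`,
subtracting `(1 - c) ₁φ₁(a; c; q, x)` then leaves `(1 - a q^{k+1}) - (1 - a) = a (1 - q^{k+1})`,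
which cancels the last factor of `(q;q)_{k+1}` and gives the coefficient of
`-a x ₁φ₁(aq; cq; q, xq)`. All series converge since consecutive terms have ratio `O(q^j)`.
-/

open Filter Topology

theorem summable_of_norm_succ_le_mul_of_tendsto_zero {α : Type*} [SeminormedAddCommGroup α]
    [CompleteSpace α] {f : ℕ → α} {r : ℕ → ℝ} (hr : Tendsto r atTop (𝓝 0))
    (hf : ∀ n, ‖f (n + 1)‖ ≤ r n * ‖f n‖) : Summable f := by
  refine summable_of_ratio_norm_eventually_le (r := 1 / 2) (by norm_num) ?_
  filter_upwards [hr.eventually (ge_mem_nhds (by norm_num : (0 : ℝ) < 1 / 2))] with n hn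
  exact (hf n).trans (mul_le_mul_of_nonneg_right hn (norm_nonneg _))

lemma qPoch_succ (a q : ℂ) (j : ℕ) : qPoch a q (j + 1) = qPoch a q j * (1 - a * q ^ j) :=
  Finset.prod_range_succ _ _

lemma qPoch_succ' (a q : ℂ) (j : ℕ) : qPoch a q (j + 1) = (1 - a) * qPoch (a * q) q j := by
  rw [qPoch, Finset.prod_range_succ', pow_zero, mul_one, mul_comm, qPoch]
  simp only [pow_succ', mul_assoc]

lemma qPoch_ne_zero {a q : ℂ} (ha : ∀ i : ℕ, a * q ^ i ≠ 1) (j : ℕ) : qPoch a q j ≠ 0 :=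
  Finset.prod_ne_zero_iff.2 fun i _ => sub_ne_zero.2 (ha i).symm

lemma mul_pow_ne_one_of_norm_lt_one {q : ℂ} (hq : ‖q‖ < 1) (i : ℕ) : q * q ^ i ≠ 1 := by
  rw [← pow_succ']
  intro h
  have := norm_pow q (i + 1) ▸ pow_lt_one₀ (norm_nonneg q) hq i.succ_ne_zero
  simp [h] at this

lemma mul_mul_pow_ne_one {c q : ℂ} (hc : ∀ n : ℕ, c * q ^ n ≠ 1) (i : ℕ) :
    c * q * q ^ i ≠ 1 := by
  simpa only [mul_assoc, ← pow_succ'] using hc (i + 1)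

noncomputable def phi11Term (a c q x : ℂ) (j : ℕ) : ℂ :=
  qPoch a q j / (qPoch q q j * qPoch c q j) * (-1) ^ j * q ^ (j * (j - 1) / 2) * x ^ j

lemma phi11_eq_tsum (a c q x : ℂ) : phi11 a c q x = ∑' j, phi11Term a c q x j := rfl

lemma phi11Term_mul_q (a c q x : ℂ) (j : ℕ) :
    phi11Term a c q (x * q) j = q ^ j * phi11Term a c q x j := by
  rw [phi11Term, phi11Term, mul_pow]
  ring

lemma phi11Term_zero (a c q x : ℂ) : phi11Term a c q x 0 = 1 := by
  simp [phi11Term, qPoch]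

noncomputable def phi11Ratio (a c q x z : ℂ) : ℂ :=
  (1 - a * z) / ((1 - q * z) * (1 - c * z)) * (-(z * x))

section

variable {a c q x : ℂ}

lemma phi11Term_succ (hq : ∀ n : ℕ, q * q ^ n ≠ 1) (hc : ∀ n : ℕ, c * q ^ n ≠ 1)
    (j : ℕ) :
    phi11Term a c q x (j + 1) = phi11Term a c q x j * phi11Ratio a c q x (q ^ j) := by
  have hQ := qPoch_ne_zero hq j
  have hC := qPoch_ne_zero hc j
  have hQj := sub_ne_zero.2 (hq j).symm
  have hCj := sub_ne_zero.2 (hc j).symm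
  rw [phi11Term, phi11Term, phi11Ratio, qPoch_succ, qPoch_succ, qPoch_succ, Nat.triangle_succ]
  field_simp
  ring

lemma phi11Term_summable (hq : ‖q‖ < 1) (hc : ∀ n : ℕ, c * q ^ n ≠ 1) :
    Summable (phi11Term a c q x) := by
  have hratio : ContinuousAt (phi11Ratio a c q x) 0 := by
    unfold phi11Ratio
    fun_prop (disch := norm_num)
  have hzero : phi11Ratio a c q x 0 = 0 := by simp [phi11Ratio]
  have hlim :=
    ((hzero ▸ hratio.tendsto).comp (tendsto_pow_atTop_nhds_zero_of_norm_lt_one hq)).norm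
  rw [norm_zero] at hlim
  refine summable_of_norm_succ_le_mul_of_tendsto_zero hlim fun n => ?_
  rw [phi11Term_succ (mul_pow_ne_one_of_norm_lt_one hq) hc, norm_mul, mul_comm]
  exact le_rfl

lemma phi11Term_succ_eq_shift (hq : ∀ n : ℕ, q * q ^ n ≠ 1)
    (hc : ∀ n : ℕ, c * q ^ n ≠ 1) (k : ℕ) :
    (1 - c) * phi11Term a c q x (k + 1)
      = (1 - a) * phi11Term (a * q) (c * q) q x k * (-(q ^ k * x)) / (1 - q * q ^ k) := by
  have hQ := qPoch_ne_zero hq k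
  have hC := qPoch_ne_zero (mul_mul_pow_ne_one hc) k
  have hQk := sub_ne_zero.2 (hq k).symm
  have hc0 : 1 - c ≠ 0 := sub_ne_zero.2 fun h => hc 0 (by simp [← h])
  rw [phi11Term, phi11Term, qPoch_succ q, qPoch_succ' a, qPoch_succ' c, Nat.triangle_succ]
  field_simp
  ring

lemma phi11Term_contiguous (hq : ∀ n : ℕ, q * q ^ n ≠ 1) (hc : ∀ n : ℕ, c * q ^ n ≠ 1)
    (k : ℕ) :
    phi11Term (a * q) (c * q) q x (k + 1) - c * phi11Term (a * q) (c * q) q (x * q) (k + 1)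
      - (1 - c) * phi11Term a c q x (k + 1) = -(a * x) * phi11Term (a * q) (c * q) q (x * q) k := by
  have hcq := mul_mul_pow_ne_one hc
  have hQk := sub_ne_zero.2 (hq k).symm
  have hCk := sub_ne_zero.2 (hcq k).symm
  rw [phi11Term_mul_q, phi11Term_mul_q, phi11Term_succ_eq_shift hq hc,
    phi11Term_succ hq hcq, phi11Ratio, pow_succ]
  generalize phi11Term (a * q) (c * q) q x k = t
  generalize q ^ k = z at hQk hCk ⊢
  have hcancel : (1 - a * q * z) / ((1 - q * z) * (1 - c * q * z)) * (1 - c * (z * q))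
      = (1 - a * q * z) / (1 - q * z) := by
    rw [div_mul_eq_mul_div, mul_comm z q, ← mul_assoc, mul_div_mul_right _ _ hCk]
  linear_combination (-(t * z * x)) * hcancel - (t * a * z * x) * mul_inv_cancel₀ hQk

end

theorem phi11_three_term_recurrence (q a c x : ℂ) (hq : ‖q‖ < 1)
    (hc : ∀ n : ℕ, c * q ^ n ≠ 1) :
    phi11 (a * q) (c * q) q x
      = (c - a * x) * phi11 (a * q) (c * q) q (x * q)
        + (1 - c) * phi11 a c q x := by
  have hq₁ := mul_pow_ne_one_of_norm_lt_one hq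
  have hcq := mul_mul_pow_ne_one hc
  have S₁ := phi11Term_summable (a := a * q) (x := x) hq hcq
  have S₂ := (phi11Term_summable (a := a * q) (x := x * q) hq hcq).mul_left c
  have S₃ := (phi11Term_summable (a := a) (x := x) hq hc).mul_left (1 - c)
  have hsum : ∑' j, (phi11Term (a * q) (c * q) q x j - c * phi11Term (a * q) (c * q) q (x * q) j
      - (1 - c) * phi11Term a c q x j) = -(a * x) * phi11 (a * q) (c * q) q (x * q) := by
    rw [((S₁.sub S₂).sub S₃).tsum_eq_zero_add]
    simp only [phi11Term_zero, phi11Term_contiguous hq₁ hc, tsum_mul_left, phi11_eq_tsum]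
    ring
  rw [(S₁.sub S₂).tsum_sub S₃, S₁.tsum_sub S₂, tsum_mul_left, tsum_mul_left] at hsum
  simp only [phi11_eq_tsum] at hsum ⊢
  linear_combination hsum
end

section
/- For |q|<1, x ≠ 0, and c not equal to 1 or a negative integer power of q, ₀φ₁ satisfies ₀φ₁(−; cq²; q, xq²) = −[(1−c)(1−cq)/x] · ₀φ₁(−; cq; q, xq) + [(1−c)(1−cq)/x] · ₀φ₁(−; c; q, x). -/
open scoped BigOperators

/-!
Compare the series term by term. The constant terms of `₀φ₁(c; x)` and `₀φ₁(cq; xq)` cancel, and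
since `(c;q)_{j+1} = (1 - c)(cq;q)_j` and `(cq;q)_{j+1} = (1 - cq)(cq²;q)_j`, their `(j+1)`-st
terms differ by `x / ((1 - c)(1 - cq))` times the `j`-th term of `₀φ₁(cq²; xq²)`. All series
converge absolutely by the ratio test, the ratio of consecutive terms being `O(q^{2j})`.
-/

namespace QHypergeometric

theorem qPoch_succ (a q : ℂ) (j : ℕ) : qPoch a q (j + 1) = qPoch a q j * (1 - a * q ^ j) :=
  Finset.prod_range_succ _ _

theorem qPoch_succ_eq_mul_qPoch_mul (a q : ℂ) (j : ℕ) :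
    qPoch a q (j + 1) = (1 - a) * qPoch (a * q) q j := by
  simp only [qPoch, Finset.prod_range_succ', pow_zero, mul_one, pow_succ', mul_assoc, mul_comm]

theorem qPoch_ne_zero {a q : ℂ} (h : ∀ n : ℕ, a * q ^ n ≠ 1) (j : ℕ) : qPoch a q j ≠ 0 :=
  Finset.prod_ne_zero_iff.mpr fun n _ => sub_ne_zero.mpr (h n).symm

theorem mul_pow_ne_one_of_norm_lt_one {q : ℂ} (hq : ‖q‖ < 1) (n : ℕ) : q * q ^ n ≠ 1 := by
  intro h
  have : ‖q ^ (n + 1)‖ < 1 := by rw [norm_pow]; exact pow_lt_one₀ (norm_nonneg q) hq n.succ_ne_zero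
  rw [pow_succ', h, norm_one] at this
  exact this.false

theorem mul_pow_mul_pow_ne_one {c q : ℂ} (hc : ∀ n : ℕ, c * q ^ n ≠ 1) (k n : ℕ) :
    c * q ^ k * q ^ n ≠ 1 := by
  rw [mul_assoc, ← pow_add]
  exact hc (k + n)

noncomputable def phi01Term (c q x : ℂ) (j : ℕ) : ℂ :=
  q ^ (j * (j - 1)) * x ^ j / (qPoch q q j * qPoch c q j)

theorem phi01_eq_tsum (c q x : ℂ) : phi01 c q x = ∑' j, phi01Term c q x j := rfl

theorem phi01Term_zero (c q x : ℂ) : phi01Term c q x 0 = 1 := by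
  simp [phi01Term, qPoch]

theorem pow_succ_mul_self (q : ℂ) (j : ℕ) : q ^ ((j + 1) * j) = q ^ (j * (j - 1)) * q ^ (2 * j) := by
  rw [← pow_add]
  congr 1
  cases j
  · simp
  · simp only [Nat.add_sub_cancel]; ring

/-- Holds for every `c`: when `(c;q)_j = 0`, both sides are `0` because `a / 0 = 0`. -/
theorem phi01Term_succ (c q x : ℂ) (j : ℕ) :
    phi01Term c q x (j + 1) =
      phi01Term c q x j * (q ^ (2 * j) * x / ((1 - q * q ^ j) * (1 - c * q ^ j))) := by
  simp only [phi01Term, Nat.add_sub_cancel, qPoch_succ, pow_succ_mul_self, div_eq_mul_inv, mul_inv]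
  ring

theorem tendsto_phi01Term_ratio (c q x : ℂ) (hq : ‖q‖ < 1) :
    Filter.Tendsto (fun j : ℕ => q ^ (2 * j) * x / ((1 - q * q ^ j) * (1 - c * q ^ j)))
      Filter.atTop (nhds 0) := by
  have hpow : Filter.Tendsto (fun j : ℕ => q ^ j) Filter.atTop (nhds 0) :=
    tendsto_pow_atTop_nhds_zero_of_norm_lt_one hq
  have hnum : Filter.Tendsto (fun j : ℕ => q ^ (2 * j) * x) Filter.atTop (nhds 0) := by
    simpa only [← pow_mul, mul_comm _ 2, ne_eq, OfNat.ofNat_ne_zero, not_false_eq_true,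
      zero_pow, zero_mul] using (hpow.pow 2).mul_const x
  have hden : Filter.Tendsto (fun j : ℕ => (1 - q * q ^ j) * (1 - c * q ^ j)) Filter.atTop
      (nhds 1) := by
    simpa only [mul_zero, sub_zero, mul_one] using
      ((tendsto_const_nhds (x := (1 : ℂ))).sub (hpow.const_mul q)).mul
        ((tendsto_const_nhds (x := (1 : ℂ))).sub (hpow.const_mul c))
  simpa only [zero_div, Pi.div_def] using hnum.div hden one_ne_zero

theorem summable_phi01Term (c x : ℂ) {q : ℂ} (hq : ‖q‖ < 1) : Summable (phi01Term c q x) := by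
  refine summable_of_ratio_norm_eventually_le one_half_lt_one ?_
  filter_upwards [(tendsto_phi01Term_ratio c q x hq).norm.eventually
    (ge_mem_nhds (by norm_num : ‖(0 : ℂ)‖ < 1 / 2))] with j hj
  rw [phi01Term_succ, norm_mul, mul_comm]
  exact mul_le_mul_of_nonneg_right hj (norm_nonneg _)

theorem phi01Term_succ_sub_phi01Term_succ {c q : ℂ} (x : ℂ) (hq : ∀ n : ℕ, q * q ^ n ≠ 1)
    (hc : ∀ n : ℕ, c * q ^ n ≠ 1) (j : ℕ) :
    phi01Term c q x (j + 1) - phi01Term (c * q) q (x * q) (j + 1) =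
      x / ((1 - c) * (1 - c * q)) * phi01Term (c * q ^ 2) q (x * q ^ 2) j := by
  have hc0 : 1 - c ≠ 0 := sub_ne_zero.mpr (by simpa using (hc 0).symm)
  have hc1 : 1 - q * c ≠ 0 := sub_ne_zero.mpr (by simpa [mul_comm] using (hc 1).symm)
  have hqj : 1 - q * q ^ j ≠ 0 := sub_ne_zero.mpr (hq j).symm
  have hP := qPoch_ne_zero hq j
  have hW : qPoch (c * q) q j ≠ 0 := by
    simpa only [pow_one] using qPoch_ne_zero (mul_pow_mul_pow_ne_one hc 1) j
  have hR := qPoch_ne_zero (mul_pow_mul_pow_ne_one hc 2) j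
  have hWR : qPoch (c * q) q j * (1 - c * q * q ^ j) = (1 - c * q) * qPoch (c * q ^ 2) q j := by
    rw [← qPoch_succ, qPoch_succ_eq_mul_qPoch_mul, mul_assoc, ← sq]
  simp only [phi01Term, Nat.add_sub_cancel, pow_succ_mul_self, qPoch_succ q q j,
    qPoch_succ_eq_mul_qPoch_mul c, qPoch_succ (c * q), hWR]
  generalize qPoch (c * q) q j = W at hW hWR ⊢
  generalize qPoch (c * q ^ 2) q j = R at hR hWR ⊢
  field_simp
  linear_combination -(q ^ (2 * j) * q ^ (j * (j - 1)) * x * x ^ j) * hWR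

theorem phi01_sub_phi01_mul {c q : ℂ} (x : ℂ) (hq : ‖q‖ < 1) (hc : ∀ n : ℕ, c * q ^ n ≠ 1) :
    phi01 c q x - phi01 (c * q) q (x * q) =
      x / ((1 - c) * (1 - c * q)) * phi01 (c * q ^ 2) q (x * q ^ 2) := by
  have h₀ := summable_phi01Term c x hq
  have h₁ := summable_phi01Term (c * q) (x * q) hq
  rw [phi01_eq_tsum, phi01_eq_tsum, phi01_eq_tsum, ← h₀.tsum_sub h₁, (h₀.sub h₁).tsum_eq_zero_add]
  simp only [phi01Term_zero, sub_self, zero_add,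
    phi01Term_succ_sub_phi01Term_succ x (mul_pow_ne_one_of_norm_lt_one hq) hc, tsum_mul_left]

end QHypergeometric

open QHypergeometric in
theorem phi01_three_term_recurrence_22 (q c x : ℂ) (hq : ‖q‖ < 1)
    (hc : ∀ n : ℕ, c * q ^ n ≠ 1) (hx : x ≠ 0) :
    phi01 (c * q ^ 2) q (x * q ^ 2)
      = -((1 - c) * (1 - c * q) / x) * phi01 (c * q) q (x * q)
        + (1 - c) * (1 - c * q) / x * phi01 c q x := by
  have hc0 : 1 - c ≠ 0 := sub_ne_zero.mpr (by simpa using (hc 0).symm)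
  have hc1 : 1 - c * q ≠ 0 := sub_ne_zero.mpr (by simpa using (hc 1).symm)
  rw [neg_mul, neg_add_eq_sub, ← mul_sub, phi01_sub_phi01_mul x hq hc]
  field_simp
end
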